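/- Let (X,r) be a finite left non-degenerate idempotent solution with diagonal map q. Then q^k(x) = λ_{kx}^{-1}(x) for every x ∈ X and every positive integer k, and q^{d+1} = q; consequently q is bijective if and only if q^d = id, if and only if Λ = X. -/

import Mathlib

open Function

variable {X : Type*}

def lam (r : X × X → X × X) (x y : X) : X := (r (x, y)).1

def rho (r : X × X → X × X) (y x : X) : X := (r (x, y)).2

/-- `r × id` acting on triples. -/
def rl (r : X × X → X × X) : X × X × X → X × X × X :=
  fun p => ((r (p.1, p.2.1)).1, (r (p.1, p.2.1)).2, p.2.2)

/-- `id × r` acting on triples. -/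
def rr (r : X × X → X × X) : X × X × X → X × X × X :=
  fun p => (p.1, r (p.2.1, p.2.2))

/-- the Yang–Baxter (braid) equation for a set-theoretic map. -/
def YB (r : X × X → X × X) : Prop :=
  rl r ∘ rr r ∘ rl r = rr r ∘ rl r ∘ rr r

/-- the relation `x + y = y + y` on the free monoid. -/
def simpleRel (X : Type*) : FreeMonoid X → FreeMonoid X → Prop :=
  fun a b => ∃ x y : X, a = FreeMonoid.of x * FreeMonoid.of y ∧
    b = FreeMonoid.of y * FreeMonoid.of y

/-- the derived structure monoid `A(X,r)` of a left non-degenerate idempotent solution. -/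
abbrev DerMon (X : Type*) := (conGen (simpleRel X)).Quotient

def dof (x : X) : DerMon X := (conGen (simpleRel X)).mk' (FreeMonoid.of x)

/-- the diagonal map `q(x) = λ_x⁻¹(x)`. -/
def qmap (L : DerMon X → Equiv.Perm X) (x : X) : X := (L (dof x))⁻¹ x

/-- the product of the structure semigroup realised on pairs `(a, λ_a)`. -/
def sop (L : DerMon X → Equiv.Perm X) (act : Equiv.Perm X → DerMon X →* DerMon X)
    (a b : DerMon X) : DerMon X := a * act (L a) b

/-- the component `S_u = {(a,λ_a) : λ_a⁻¹(a) = |a|·u}`. -/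
def Su (L : DerMon X → Equiv.Perm X) (act : Equiv.Perm X → DerMon X →* DerMon X)
    (len : DerMon X → ℕ) (u : X) : Set (DerMon X) :=
  {a | a ≠ 1 ∧ act (L a)⁻¹ a = dof u ^ len a}

/-- `X_u = {x ∈ X : λ_{dx}(u) = x}`. -/
def Xu (L : DerMon X → Equiv.Perm X) (d : ℕ) (u : X) : Set X :=
  {x | L (dof x ^ d) u = x}

/-- the defining relation of the derived structure monoid. -/
lemma dof_rel (x y : X) : dof x * dof y = dof y * dof y := by
  unfold dof
  rw [← map_mul, ← map_mul]
  exact (Con.eq _).mpr (ConGen.Rel.of _ _ ⟨x, y, rfl, rfl⟩)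

/-- induction on the derived monoid via words. -/
lemma derMon_ind {C : DerMon X → Prop} (h1 : C 1)
    (hstep : ∀ (x : X) (a : DerMon X), C a → C (dof x * a)) : ∀ a, C a := by
  intro a
  induction a using Con.induction_on with
  | H w =>
    induction w using FreeMonoid.inductionOn' with
    | one => exact h1
    | of_mul x xs ih => exact hstep x _ ih

section main

variable (L : DerMon X → Equiv.Perm X) (act : Equiv.Perm X → DerMon X →* DerMon X)
  (len : DerMon X → ℕ)

lemma len_one (hlenmul : ∀ a b : DerMon X, len (a * b) = len a + len b) :
    len (1 : DerMon X) = 0 := by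
  have := hlenmul 1 1
  simp at this
  omega

lemma len_pow (hlenmul : ∀ a b : DerMon X, len (a * b) = len a + len b)
    (hlenof : ∀ x : X, len (dof x) = 1) (x : X) (k : ℕ) : len (dof x ^ k) = k := by
  induction k with
  | zero => simpa using len_one len hlenmul
  | succ n ih => rw [pow_succ, hlenmul, ih, hlenof]

lemma collapse1 (hlenmul : ∀ a b : DerMon X, len (a * b) = len a + len b)
    (hlenof : ∀ x : X, len (dof x) = 1) (a : DerMon X) (z : X) :
    a * dof z = dof z ^ (len a + 1) := by
  induction a using derMon_ind with
  | h1 => simp [len_one len hlenmul]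
  | hstep x b ih =>
    rw [mul_assoc, ih, hlenmul, hlenof]
    calc dof x * dof z ^ (len b + 1)
        = dof x * (dof z * dof z ^ len b) := by rw [← pow_succ']
      _ = (dof x * dof z) * dof z ^ len b := by rw [mul_assoc]
      _ = dof z * (dof z * dof z ^ len b) := by rw [dof_rel, mul_assoc]
      _ = dof z ^ (len b + 1 + 1) := by rw [← pow_succ', ← pow_succ']
      _ = dof z ^ (1 + len b + 1) := by ring_nf

lemma collapse (hlenmul : ∀ a b : DerMon X, len (a * b) = len a + len b)
    (hlenof : ∀ x : X, len (dof x) = 1) (a : DerMon X) (z : X) (k : ℕ) (hk : 1 ≤ k) :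
    a * dof z ^ k = dof z ^ (len a + k) := by
  obtain ⟨m, rfl⟩ := Nat.exists_eq_add_of_le hk
  rw [add_comm 1 m, pow_succ', ← mul_assoc, collapse1 len hlenmul hlenof, ← pow_add]
  ring_nf

lemma act_dof_pow (hact : ∀ (f : Equiv.Perm X) (x : X), act f (dof x) = dof (f x))
    (f : Equiv.Perm X) (z : X) (k : ℕ) : act f (dof z ^ k) = dof (f z) ^ k := by
  rw [map_pow, hact]

/-- the key cocycle identity. -/
lemma keyIII (hact : ∀ (f : Equiv.Perm X) (x : X), act f (dof x) = dof (f x))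
    (hlenmul : ∀ a b : DerMon X, len (a * b) = len a + len b)
    (hlenof : ∀ x : X, len (dof x) = 1)
    (hcoc : ∀ a b : DerMon X, L (a * act (L a) b) = L a * L b)
    (a : DerMon X) (z : X) (m : ℕ) (hm : 1 ≤ m) :
    L (dof ((L a) z) ^ (len a + m)) = L a * L (dof z ^ m) := by
  have := hcoc a (dof z ^ m)
  rwa [act_dof_pow act hact, collapse len hlenmul hlenof _ _ _ hm] at this

lemma keyIter (hact : ∀ (f : Equiv.Perm X) (x : X), act f (dof x) = dof (f x))
    (hlenmul : ∀ a b : DerMon X, len (a * b) = len a + len b)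
    (hlenof : ∀ x : X, len (dof x) = 1)
    (hcoc : ∀ a b : DerMon X, L (a * act (L a) b) = L a * L b)
    (w : X) (j : ℕ) (z : X) (m : ℕ) (hm : 1 ≤ m) :
    L (dof (((L (dof w)) ^ j) z) ^ (j + m)) = (L (dof w)) ^ j * L (dof z ^ m) := by
  induction j with
  | zero => simp
  | succ n ih =>
    have h := keyIII L act len hact hlenmul hlenof hcoc (dof w)
      (((L (dof w)) ^ n) z) (n + m) (by omega)
    rw [hlenof, ih] at h
    have e1 : (L (dof w)) ((L (dof w) ^ n) z) = ((L (dof w)) ^ (n+1)) z := by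
      rw [pow_succ']; rfl
    rw [e1] at h
    rw [show n + 1 + m = 1 + (n + m) by ring, h, pow_succ', mul_assoc]

lemma periodic (hact : ∀ (f : Equiv.Perm X) (x : X), act f (dof x) = dof (f x))
    (hlenmul : ∀ a b : DerMon X, len (a * b) = len a + len b)
    (hlenof : ∀ x : X, len (dof x) = 1)
    (hcoc : ∀ a b : DerMon X, L (a * act (L a) b) = L a * L b)
    (d : ℕ) (hdexp : ∀ a : DerMon X, L a ^ d = 1) (z : X) (m : ℕ) (hm : 1 ≤ m) :
    L (dof z ^ (d + m)) = L (dof z ^ m) := by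
  have h := keyIter L act len hact hlenmul hlenof hcoc z d z m hm
  rw [hdexp (dof z)] at h
  simpa using h

lemma part1 (hact : ∀ (f : Equiv.Perm X) (x : X), act f (dof x) = dof (f x))
    (hlenmul : ∀ a b : DerMon X, len (a * b) = len a + len b)
    (hlenof : ∀ x : X, len (dof x) = 1)
    (hcoc : ∀ a b : DerMon X, L (a * act (L a) b) = L a * L b)
    (x : X) (k : ℕ) (hk : 0 < k) :
    (qmap L)^[k] x = (L ((dof x : DerMon X) ^ k))⁻¹ x := by
  induction k with
  | zero => omega
  | succ n ih =>
    rcases Nat.eq_zero_or_pos n with rfl | hn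
    · simp [qmap]
    · rw [iterate_succ_apply', ih hn, qmap]
      have h := keyIII L act len hact hlenmul hlenof hcoc (dof x ^ n)
        ((L (dof x ^ n))⁻¹ x) 1 le_rfl
      rw [len_pow len hlenmul hlenof, Equiv.Perm.coe_inv, Equiv.apply_symm_apply, pow_one] at h
      rw [h]
      simp

end main

/-- `q^k(x) = λ_{kx}⁻¹(x)` for all `k ≥ 1`, `q^{d+1} = q`; hence `q` is bijective
iff `q^d = id`, iff `Λ = X`. -/
theorem statement14
    {X : Type*} [Fintype X] (r : X × X → X × X) (hYB : YB r) (hidem : r ∘ r = r)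
    (L : DerMon X → Equiv.Perm X)
    (hLx : ∀ x y : X, L (dof x) y = lam r x y)
    (hL1 : L 1 = 1)
    (act : Equiv.Perm X → DerMon X →* DerMon X)
    (hact : ∀ (f : Equiv.Perm X) (x : X), act f (dof x) = dof (f x))
    (hact1 : ∀ a : DerMon X, act 1 a = a)
    (hactmul : ∀ (f g : Equiv.Perm X) (a : DerMon X), act (f * g) a = act f (act g a))
    (len : DerMon X → ℕ)
    (hlenmul : ∀ a b : DerMon X, len (a * b) = len a + len b)
    (hlenof : ∀ x : X, len (dof x) = 1)
    (hcoc : ∀ a b : DerMon X, L (a * act (L a) b) = L a * L b)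
    (d : ℕ) (hd : 0 < d) (hdexp : ∀ a : DerMon X, L a ^ d = 1)
    :
    (∀ (x : X) (k : ℕ), 0 < k → (qmap L)^[k] x = (L ((dof x : DerMon X) ^ k))⁻¹ x) ∧
    (qmap L)^[d + 1] = qmap L ∧
    (Function.Bijective (qmap L) ↔ (qmap L)^[d] = id) ∧
    (Function.Bijective (qmap L) ↔ Set.range (qmap L) = Set.univ) := by
  have hp1 := part1 L act len hact hlenmul hlenof hcoc
  have hper : (qmap L)^[d + 1] = qmap L := by
    funext x
    rw [hp1 x (d+1) (by omega),
      periodic L act len hact hlenmul hlenof hcoc d hdexp x 1 le_rfl]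
    simp [qmap]
  refine ⟨hp1, hper, ?_, ?_⟩
  · constructor
    · intro hbij
      funext x
      have h2 : qmap L ((qmap L)^[d] x) = qmap L x := by
        have := congrFun hper x
        rwa [iterate_succ_apply'] at this
      exact hbij.1 h2
    · intro hid
      obtain ⟨e, rfl⟩ := Nat.exists_eq_add_of_le hd
      refine Function.bijective_iff_has_inverse.mpr ⟨(qmap L)^[e], ?_, ?_⟩
      · intro x
        have := congrFun hid x
        rwa [add_comm, iterate_add_apply] at this
      · intro x
        have := congrFun hid x
        rwa [iterate_add_apply] at this
  · rw [Set.range_eq_univ]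
    exact ⟨fun h => h.2, fun h => (Finite.surjective_iff_bijective).mp h⟩
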